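/- Let E be a Hopf algebra, A an E-module algebra, B = A∗E. A right E-linear map f: B → B automatically satisfies the braided left E-linearity relation f(wb) = w_1 (w_2 · f)(b) for all w ∈ E and b ∈ B, where (w·f)(b) := w_1 · f(S^{-1}(w_2)·b) and · is the adjoint action S(u_1) b u_2. -/

import Mathlib

/-!
STATEMENT 17: Let `E` be a Hopf algebra, `A` an `E`-module algebra, `B = A∗E`.
A right `E`-linear map `f : B → B` automatically satisfies the braided left
`E`-linearity relation `f(w b) = w₁ ((w₂ • f)(b))`, where
`(w • f)(b) := w₁ · f(S⁻¹(w₂) · b)` and `·` is the adjoint action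
`u · b = S(u₁) b u₂`.
-/

open TensorProduct

/-- The action of `E` on `M` as a linear map into `k`-endomorphisms. -/
def endoAct (k E M : Type*) [CommRing k] [Ring E] [Algebra k E] [AddCommGroup M]
    [Module k M] [Module E M] [IsScalarTower k E M] [SMulCommClass E k M] :
    E →ₗ[k] Module.End k M where
  toFun h :=
    { toFun := fun m => h • m
      map_add' := fun a b => smul_add h a b
      map_smul' := fun c m => smul_comm h c m }
  map_add' h h' := LinearMap.ext fun m => add_smul h h' m
  map_smul' c h := LinearMap.ext fun m => smul_assoc c h m

/-- The componentwise action of `E ⊗ E` on `M ⊗ N`. -/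
noncomputable def actT (k E M N : Type*) [CommRing k] [Ring E] [Algebra k E]
    [AddCommGroup M] [Module k M] [Module E M] [IsScalarTower k E M] [SMulCommClass E k M]
    [AddCommGroup N] [Module k N] [Module E N] [IsScalarTower k E N] [SMulCommClass E k N] :
    E ⊗[k] E →ₗ[k] Module.End k (M ⊗[k] N) :=
  (TensorProduct.homTensorHomMap (RingHom.id k) M N M N) ∘ₗ
    (TensorProduct.map (endoAct k E M) (endoAct k E N))

/-- The multiplication of the smash product `A∗E`:
`(a ⊗ w)(a' ⊗ w') = a (w₁ • a') ⊗ w₂ w'`. -/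
noncomputable def smashMulMap (k E A : Type*) [CommRing k] [Ring E] [HopfAlgebra k E]
    [Ring A] [Algebra k A] [Module E A] [IsScalarTower k E A] [SMulCommClass E k A] :
    (A ⊗[k] E) ⊗[k] (A ⊗[k] E) →ₗ[k] A ⊗[k] E :=
  (TensorProduct.map (LinearMap.mul' k A) LinearMap.id) ∘ₗ
    (TensorProduct.assoc k A A E).symm.toLinearMap ∘ₗ
    (TensorProduct.map LinearMap.id
      (TensorProduct.map (TensorProduct.lift (endoAct k E A)) (LinearMap.mul' k E))) ∘ₗ
    (TensorProduct.map LinearMap.id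
      (TensorProduct.tensorTensorTensorComm k E E A E).toLinearMap) ∘ₗ
    (TensorProduct.assoc k A (E ⊗[k] E) (A ⊗[k] E)).toLinearMap ∘ₗ
    (TensorProduct.map
      (TensorProduct.map LinearMap.id (Coalgebra.comul (R := k) (A := E)))
      LinearMap.id)

/-- The inclusion `E → A∗E`, `w ↦ 1 ⊗ w`. -/
noncomputable def smashIncl (k E A : Type*) [CommRing k] [Ring E] [Algebra k E]
    [Ring A] [Algebra k A] : E →ₗ[k] A ⊗[k] E :=
  TensorProduct.mk k A E 1

/-- The (right) adjoint action of `E` on `B = A∗E`: `u ⊗ b ↦ S(u₁) b u₂`. -/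
noncomputable def adjAct (k E A : Type*) [CommRing k] [Ring E] [HopfAlgebra k E]
    [Ring A] [Algebra k A] [Module E A] [IsScalarTower k E A] [SMulCommClass E k A] :
    E ⊗[k] (A ⊗[k] E) →ₗ[k] A ⊗[k] E :=
  (smashMulMap k E A) ∘ₗ
    (TensorProduct.map (smashIncl k E A) LinearMap.id) ∘ₗ
    (TensorProduct.map LinearMap.id
      ((smashMulMap k E A) ∘ₗ (TensorProduct.map LinearMap.id (smashIncl k E A)))) ∘ₗ
    (TensorProduct.map LinearMap.id (TensorProduct.comm k E (A ⊗[k] E)).toLinearMap) ∘ₗ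
    (TensorProduct.map (HopfAlgebra.antipode (R := k) (A := E)) LinearMap.id) ∘ₗ
    (TensorProduct.assoc k E E (A ⊗[k] E)).toLinearMap ∘ₗ
    (TensorProduct.map (Coalgebra.comul (R := k) (A := E)) LinearMap.id)

/-!
Work in the convolution algebra of `k`-linear maps `E → End_k B`, `B = A ∗ E`. Left and right
multiplication by `1 ⊗ u` give maps `L` and `R`, with `L` an algebra map, `R` an anti-algebra map,
and every `L x` commuting with every `R y`. The adjoint action is `ad = (L ∘ S) * R`, so
`L * ad = R`; and since `S⁻¹` reverses the comultiplication, `ad ∘ S⁻¹ = (R ∘ S⁻¹) * L` with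
`R * (R ∘ S⁻¹) = 1`. Right `E`-linearity says that `f` commutes with every `R w`, hence
`L * (w ↦ w · f) = L * ad * (f ∘ ad ∘ S⁻¹) = R * (f ∘ ad ∘ S⁻¹) = f ∘ (R * (R ∘ S⁻¹) * L)`,
which is `f ∘ L`.
-/

open TensorProduct Coalgebra WithConv

section Convolution
variable {k C M : Type*} [CommSemiring k] [AddCommMonoid C] [Module k C] [Coalgebra k C]
  [Semiring M] [Algebra k M]

theorem convMul_comp_of_comul_comp_eq_comm_map {φ : C →ₗ[k] C}
    (hφ : comul ∘ₗ φ = (TensorProduct.comm k C C).toLinearMap ∘ₗ map φ φ ∘ₗ comul)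
    {f g : C →ₗ[k] M} (hfg : ∀ x y, Commute (f x) (g y)) :
    toConv ((toConv f * toConv g).ofConv ∘ₗ φ) =
      toConv (g ∘ₗ φ) * toConv (f ∘ₗ φ) := by
  ext c
  have hc := LinearMap.congr_fun hφ c
  simp only [LinearMap.comp_apply, LinearEquiv.coe_coe] at hc
  simp [(ℛ k c).convMul_apply, LinearMap.convMul_apply _ _ (φ c), hc, ← (ℛ k c).eq, map_sum,
    (hfg _ _).eq]

theorem convMul_mulLeft_comp_of_commute {g K : C →ₗ[k] M} {a : M}
    (ha : ∀ c, Commute a (g c)) :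
    toConv g * toConv (LinearMap.mulLeft k a ∘ₗ K) =
      toConv (LinearMap.mulLeft k a ∘ₗ (toConv g * toConv K).ofConv) := by
  ext c
  simp [(ℛ k c).convMul_apply, ← mul_assoc, (ha _).eq]

end Convolution

section HopfAlgebra
variable {k E : Type*} [CommSemiring k] [Semiring E] [HopfAlgebra k E]

theorem algHom_convMul_antipode {B : Type*} [Semiring B] [Algebra k B] (h : E →ₐ[k] B) :
    toConv h.toLinearMap * toConv (h.toLinearMap ∘ₗ HopfAlgebra.antipode k) = 1 := by
  have := LinearMap.algHom_comp_convMul_distrib h (toConv LinearMap.id)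
    (toConv (HopfAlgebra.antipode k))
  rw [LinearMap.id_mul_antipode] at this
  ext x
  simpa using (LinearMap.congr_fun this x).symm

theorem comp_antipode_convMul_algHom {B : Type*} [Semiring B] [Algebra k B] (h : E →ₐ[k] B) :
    toConv (h.toLinearMap ∘ₗ HopfAlgebra.antipode k) * toConv h.toLinearMap = 1 := by
  have := LinearMap.algHom_comp_convMul_distrib h (toConv (HopfAlgebra.antipode k))
    (toConv LinearMap.id)
  rw [LinearMap.antipode_mul_id] at this
  ext x
  simpa using (LinearMap.congr_fun this x).symm

/-- `δ ∘ S` is a left and `(S ⊗ S) ∘ τ ∘ δ` a right convolution inverse of `δ`; for the latter,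
write `δ = ι₁ * ι₂` with the two algebra inclusions `ιᵢ : E → E ⊗ E`. -/
theorem comul_comp_antipode :
    comul ∘ₗ HopfAlgebra.antipode k =
      map (HopfAlgebra.antipode k) (HopfAlgebra.antipode k) ∘ₗ
        (TensorProduct.comm k E E).toLinearMap ∘ₗ (comul (R := k) (A := E)) := by
  let iL : E →ₐ[k] E ⊗[k] E := Algebra.TensorProduct.includeLeft
  let iR : E →ₐ[k] E ⊗[k] E := Algebra.TensorProduct.includeRight
  have hcomul : toConv (comul (R := k) (A := E)) =
      toConv iL.toLinearMap * toConv iR.toLinearMap := by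
    ext x
    simp [iL, iR, (ℛ k x).convMul_apply, ← (ℛ k x).eq]
  have hswap : toConv (map (HopfAlgebra.antipode k) (HopfAlgebra.antipode k) ∘ₗ
        (TensorProduct.comm k E E).toLinearMap ∘ₗ (comul (R := k) (A := E))) =
      toConv (iR.toLinearMap ∘ₗ HopfAlgebra.antipode k) *
        toConv (iL.toLinearMap ∘ₗ HopfAlgebra.antipode k) := by
    ext x
    simp [iL, iR, (ℛ k x).convMul_apply, ← (ℛ k x).eq]
  have hleft :
      toConv (comul ∘ₗ HopfAlgebra.antipode k) * toConv (comul (R := k) (A := E)) = 1 :=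
    comp_antipode_convMul_algHom (Bialgebra.comulAlgHom k E)
  have hright : toConv (comul (R := k) (A := E)) *
      toConv (map (HopfAlgebra.antipode k) (HopfAlgebra.antipode k) ∘ₗ
        (TensorProduct.comm k E E).toLinearMap ∘ₗ (comul (R := k) (A := E))) = 1 := by
    rw [hcomul, hswap, mul_assoc, ← mul_assoc (toConv iR.toLinearMap), algHom_convMul_antipode,
      one_mul, algHom_convMul_antipode]
  exact congrArg ofConv (left_inv_eq_right_inv hleft hright)

variable {Sinv : E →ₗ[k] E} (hS₁ : Function.LeftInverse Sinv (HopfAlgebra.antipode k))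
  (hS₂ : Function.RightInverse Sinv (HopfAlgebra.antipode k))
include hS₁ hS₂

theorem comul_comp_antipode_inv :
    comul ∘ₗ Sinv =
      (TensorProduct.comm k E E).toLinearMap ∘ₗ map Sinv Sinv ∘ₗ comul := by
  have hcancel : (TensorProduct.comm k E E).toLinearMap ∘ₗ map Sinv Sinv ∘ₗ
      map (HopfAlgebra.antipode k) (HopfAlgebra.antipode k) ∘ₗ
        (TensorProduct.comm k E E).toLinearMap = LinearMap.id :=
    TensorProduct.ext' fun x y => by simp [hS₁ x, hS₁ y]
  ext u
  have h := LinearMap.congr_fun (comul_comp_antipode (k := k) (E := E)) (Sinv u)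
  rw [LinearMap.comp_apply, hS₂ u] at h
  simpa [h] using (LinearMap.congr_fun hcancel (comul (Sinv u))).symm

theorem sum_antipode_inv_mul_eq_algebraMap_counit {u : E} {ι : Type*} (𝓡 : Repr k u ι) :
    ∑ i ∈ 𝓡.index, Sinv (𝓡.right i) * 𝓡.left i = algebraMap k E (counit u) := by
  apply hS₁.injective
  simp only [map_sum, HopfAlgebra.antipode_mul_antidistrib, hS₂ _,
    HopfAlgebra.sum_antipode_mul_eq_algebraMap_counit 𝓡, Algebra.algebraMap_eq_smul_one,
    map_smul, HopfAlgebra.antipode_one]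

end HopfAlgebra

section SmashRight
variable {k E A : Type*} [CommRing k] [Ring E] [Algebra k E] [Ring A] [Algebra k A]

variable (k E A) in
/-- Right multiplication by `1 ⊗ w` in `A ∗ E`. -/
noncomputable def smashRight : E →ₗ[k] Module.End k (A ⊗[k] E) :=
  LinearMap.lTensorHom A ∘ₗ (LinearMap.mul k E).flip

@[simp]
theorem smashRight_tmul (w : E) (a : A) (v : E) :
    smashRight k E A w (a ⊗ₜ v) = a ⊗ₜ (v * w) := rfl

theorem smashRight_mul (x y : E) :
    smashRight k E A (x * y) = smashRight k E A y * smashRight k E A x :=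
  TensorProduct.ext' fun a v => by simp [mul_assoc]

theorem smashRight_algebraMap (c : k) :
    smashRight k E A (algebraMap k E c) = algebraMap k _ c :=
  TensorProduct.ext' fun a v => by simp [Algebra.algebraMap_eq_smul_one]

end SmashRight

section Smash
variable {k E A : Type*} [CommRing k] [Ring E] [HopfAlgebra k E]
  [Ring A] [Algebra k A] [Module E A] [IsScalarTower k E A] [SMulCommClass E k A]

variable (k E A) in
/-- Left multiplication by `1 ⊗ u` in `A ∗ E`. -/
noncomputable def smashLeft : E →ₗ[k] Module.End k (A ⊗[k] E) :=
  homTensorHomMap (RingHom.id k) A E A E ∘ₗ map (endoAct k E A) (LinearMap.mul k E) ∘ₗ comul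

theorem smashLeft_tmul {u : E} {ι : Type*} (𝓡 : Repr k u ι) (a : A) (v : E) :
    smashLeft k E A u (a ⊗ₜ v) =
      ∑ i ∈ 𝓡.index, (𝓡.left i • a) ⊗ₜ (𝓡.right i * v) := by
  simp [smashLeft, ← 𝓡.eq, map_sum, homTensorHomMap_apply, endoAct]

theorem smashLeft_one : smashLeft k E A 1 = 1 :=
  TensorProduct.ext' fun a v => by
    simp [smashLeft, Algebra.TensorProduct.one_def, homTensorHomMap_apply, endoAct]

theorem smashLeft_mul (x y : E) :
    smashLeft k E A (x * y) = smashLeft k E A x * smashLeft k E A y := by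
  refine TensorProduct.ext' fun a v => ?_
  simp [smashLeft, homTensorHomMap_apply, endoAct, Bialgebra.comul_mul, ← (ℛ k x).eq,
    ← (ℛ k y).eq, Finset.sum_mul_sum, map_sum, mul_smul, mul_assoc]

theorem commute_smashLeft_smashRight (x y : E) :
    Commute (smashLeft k E A x) (smashRight k E A y) :=
  TensorProduct.ext' fun a v => by simp [smashLeft_tmul (ℛ k x), map_sum, mul_assoc]

theorem smashMulMap_tmul {u : E} {ι : Type*} (𝓡 : Repr k u ι) (a a' : A) (w : E) :
    smashMulMap k E A ((a ⊗ₜ u) ⊗ₜ (a' ⊗ₜ w)) =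
      ∑ i ∈ 𝓡.index, (a * 𝓡.left i • a') ⊗ₜ (𝓡.right i * w) := by
  simp [smashMulMap, ← 𝓡.eq, map_sum, sum_tmul, tmul_sum, endoAct]

theorem smashMulMap_smashIncl_tmul (u : E) (b : A ⊗[k] E) :
    smashMulMap k E A (smashIncl k E A u ⊗ₜ b) = smashLeft k E A u b := by
  induction b with
  | zero => simp
  | add x y hx hy => rw [tmul_add, map_add, map_add, hx, hy]
  | tmul a v => simp [smashIncl, smashMulMap_tmul (ℛ k u), smashLeft_tmul (ℛ k u)]

theorem smashMulMap_tmul_smashIncl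
    (honeA : ∀ w : E, w • (1 : A) = counit (R := k) w • (1 : A)) (w : E) (b : A ⊗[k] E) :
    smashMulMap k E A (b ⊗ₜ smashIncl k E A w) = smashRight k E A w b := by
  induction b with
  | zero => simp
  | add x y hx hy => rw [add_tmul, map_add, map_add, hx, hy]
  | tmul a v =>
    simp only [smashIncl, mk_apply, smashMulMap_tmul (ℛ k v), honeA, mul_smul_comm, mul_one,
      smul_tmul, ← smul_mul_assoc, ← tmul_sum, ← Finset.sum_mul, sum_counit_smul,
      smashRight_tmul]

variable (k E A) in
noncomputable def smashAdjoint : E →ₗ[k] Module.End k (A ⊗[k] E) :=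
  (toConv (smashLeft k E A ∘ₗ HopfAlgebra.antipode k) * toConv (smashRight k E A)).ofConv

theorem adjAct_tmul (honeA : ∀ w : E, w • (1 : A) = counit (R := k) w • (1 : A))
    (u : E) (b : A ⊗[k] E) :
    adjAct k E A (u ⊗ₜ b) = smashAdjoint k E A u b := by
  simp [adjAct, smashAdjoint, (ℛ k u).convMul_apply, ← (ℛ k u).eq, map_sum, sum_tmul,
    smashMulMap_tmul_smashIncl honeA, smashMulMap_smashIncl_tmul]

theorem smashLeft_convMul_smashAdjoint :
    toConv (smashLeft k E A) * toConv (smashAdjoint k E A) = toConv (smashRight k E A) := by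
  have h := algHom_convMul_antipode
    (AlgHom.ofLinearMap (smashLeft k E A) smashLeft_one smashLeft_mul)
  rw [AlgHom.toLinearMap_ofLinearMap] at h
  rw [smashAdjoint, toConv_ofConv, ← mul_assoc, h, one_mul]

variable (k E A) in
/-- The action `(w · f)(b) = w₁ · f(S⁻¹(w₂) · b)` of the statement. -/
noncomputable def braidedAction (Sinv : E →ₗ[k] E) (f : Module.End k (A ⊗[k] E)) :
    E →ₗ[k] Module.End k (A ⊗[k] E) :=
  (toConv (smashAdjoint k E A) *
    toConv (LinearMap.mulLeft k f ∘ₗ smashAdjoint k E A ∘ₗ Sinv)).ofConv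

end Smash

section BraidedLinearity
variable {k E A : Type*} [CommRing k] [Ring E] [HopfAlgebra k E] [Ring A] [Algebra k A]
  {Sinv : E →ₗ[k] E} (hS₁ : Function.LeftInverse Sinv (HopfAlgebra.antipode k))
  (hS₂ : Function.RightInverse Sinv (HopfAlgebra.antipode k))
include hS₁ hS₂

theorem smashRight_convMul_comp_antipode_inv :
    toConv (smashRight k E A) * toConv (smashRight k E A ∘ₗ Sinv) = 1 := by
  ext u : 2
  simp only [(ℛ k u).convMul_apply, LinearMap.comp_apply, ← smashRight_mul, ← map_sum,
    sum_antipode_inv_mul_eq_algebraMap_counit hS₁ hS₂, smashRight_algebraMap,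
    LinearMap.convOne_apply]

variable [Module E A] [IsScalarTower k E A] [SMulCommClass E k A]

theorem smashAdjoint_comp_antipode_inv :
    toConv (smashAdjoint k E A ∘ₗ Sinv) =
      toConv (smashRight k E A ∘ₗ Sinv) * toConv (smashLeft k E A) := by
  have h := convMul_comp_of_comul_comp_eq_comm_map (comul_comp_antipode_inv hS₁ hS₂)
    (f := smashLeft k E A ∘ₗ HopfAlgebra.antipode k) (g := smashRight k E A)
    fun x y => commute_smashLeft_smashRight _ y
  rwa [LinearMap.comp_assoc, show HopfAlgebra.antipode k ∘ₗ Sinv = LinearMap.id from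
    LinearMap.ext hS₂, LinearMap.comp_id] at h

theorem smashLeft_convMul_braidedAction {f : Module.End k (A ⊗[k] E)}
    (hf : ∀ w, Commute f (smashRight k E A w)) :
    toConv (smashLeft k E A) * toConv (braidedAction k E A Sinv f) =
      toConv (LinearMap.mulLeft k f ∘ₗ smashLeft k E A) := by
  rw [braidedAction, toConv_ofConv, ← mul_assoc, smashLeft_convMul_smashAdjoint,
    convMul_mulLeft_comp_of_commute hf, smashAdjoint_comp_antipode_inv hS₁ hS₂,
    ← mul_assoc, smashRight_convMul_comp_antipode_inv hS₁ hS₂, one_mul]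

end BraidedLinearity

theorem right_E_linear_implies_braided_left_E_linear_general
    (k E : Type*) [CommRing k] [Ring E] [HopfAlgebra k E]
    (A : Type*) [Ring A] [Algebra k A] [Module E A] [IsScalarTower k E A]
    [SMulCommClass E k A]
    -- the antipode is bijective, with inverse `Sinv`
    (Sinv : E →ₗ[k] E)
    (hS₁ : ∀ x : E, Sinv (HopfAlgebra.antipode (R := k) x) = x)
    (hS₂ : ∀ x : E, HopfAlgebra.antipode (R := k) (Sinv x) = x)
    -- `A` is an `E`-module algebra
    (honeA : ∀ w : E, w • (1 : A) = (Coalgebra.counit (R := k) w) • (1 : A))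
    -- `f : B → B` is right `E`-linear: `f(b w) = f(b) w`
    (f : A ⊗[k] E →ₗ[k] A ⊗[k] E)
    (hf : ∀ (w : E) (b : A ⊗[k] E),
      f (smashMulMap k E A (b ⊗ₜ[k] (smashIncl k E A w)))
        = smashMulMap k E A ((f b) ⊗ₜ[k] (smashIncl k E A w))) :
    -- `f(w b) = w₁ ((w₂)₁ · f(S⁻¹((w₂)₂) · b))`, as maps `E ⊗ B → B`
    f ∘ₗ (smashMulMap k E A) ∘ₗ (TensorProduct.map (smashIncl k E A) LinearMap.id)
      = (smashMulMap k E A) ∘ₗ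
        (TensorProduct.map (smashIncl k E A) LinearMap.id) ∘ₗ
        (TensorProduct.map LinearMap.id (adjAct k E A)) ∘ₗ
        (TensorProduct.map LinearMap.id (TensorProduct.map LinearMap.id
          (f ∘ₗ (adjAct k E A) ∘ₗ (TensorProduct.map Sinv LinearMap.id)))) ∘ₗ
        (TensorProduct.map LinearMap.id
          (TensorProduct.assoc k E E (A ⊗[k] E)).toLinearMap) ∘ₗ
        (TensorProduct.assoc k E (E ⊗[k] E) (A ⊗[k] E)).toLinearMap ∘ₗ
        (TensorProduct.map
          ((TensorProduct.map LinearMap.id (Coalgebra.comul (R := k) (A := E))) ∘ₗ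
            (Coalgebra.comul (R := k) (A := E)))
          LinearMap.id) := by
  have hfR (w : E) : Commute f (smashRight k E A w) := LinearMap.ext fun b => by
    simpa [smashMulMap_tmul_smashIncl honeA] using hf w b
  have key := congr(ofConv $(smashLeft_convMul_braidedAction hS₁ hS₂ hfR))
  have hcomul (x : E) :
      comul (R := k) x = ∑ i ∈ (ℛ k x).index, (ℛ k x).left i ⊗ₜ (ℛ k x).right i :=
    (ℛ k x).eq.symm
  refine TensorProduct.ext' fun w b => ?_
  simpa [braidedAction, hcomul, map_sum, sum_tmul, adjAct_tmul honeA,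
    smashMulMap_smashIncl_tmul] using (LinearMap.congr_fun (LinearMap.congr_fun key w) b).symm

theorem right_E_linear_implies_braided_left_E_linear
    (k E : Type*) [CommRing k] [Ring E] [HopfAlgebra k E]
    (A : Type*) [Ring A] [Algebra k A] [Module E A] [IsScalarTower k E A]
    [SMulCommClass E k A]
    -- the antipode is bijective, with inverse `Sinv`
    (Sinv : E →ₗ[k] E)
    (hS₁ : ∀ x : E, Sinv (HopfAlgebra.antipode (R := k) x) = x)
    (hS₂ : ∀ x : E, HopfAlgebra.antipode (R := k) (Sinv x) = x)
    -- `A` is an `E`-module algebra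
    (hmulA : ∀ w : E, (endoAct k E A w) ∘ₗ (LinearMap.mul' k A)
        = (LinearMap.mul' k A) ∘ₗ (actT k E A A (Coalgebra.comul (R := k) w)))
    (honeA : ∀ w : E, w • (1 : A) = (Coalgebra.counit (R := k) w) • (1 : A))
    -- `f : B → B` is right `E`-linear: `f(b w) = f(b) w`
    (f : A ⊗[k] E →ₗ[k] A ⊗[k] E)
    (hf : ∀ (w : E) (b : A ⊗[k] E),
      f (smashMulMap k E A (b ⊗ₜ[k] (smashIncl k E A w)))
        = smashMulMap k E A ((f b) ⊗ₜ[k] (smashIncl k E A w))) :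
    -- `f(w b) = w₁ ((w₂)₁ · f(S⁻¹((w₂)₂) · b))`, as maps `E ⊗ B → B`
    f ∘ₗ (smashMulMap k E A) ∘ₗ (TensorProduct.map (smashIncl k E A) LinearMap.id)
      = (smashMulMap k E A) ∘ₗ
        (TensorProduct.map (smashIncl k E A) LinearMap.id) ∘ₗ
        (TensorProduct.map LinearMap.id (adjAct k E A)) ∘ₗ
        (TensorProduct.map LinearMap.id (TensorProduct.map LinearMap.id
          (f ∘ₗ (adjAct k E A) ∘ₗ (TensorProduct.map Sinv LinearMap.id)))) ∘ₗ
        (TensorProduct.map LinearMap.id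
          (TensorProduct.assoc k E E (A ⊗[k] E)).toLinearMap) ∘ₗ
        (TensorProduct.assoc k E (E ⊗[k] E) (A ⊗[k] E)).toLinearMap ∘ₗ
        (TensorProduct.map
          ((TensorProduct.map LinearMap.id (Coalgebra.comul (R := k) (A := E))) ∘ₗ
            (Coalgebra.comul (R := k) (A := E)))
          LinearMap.id) :=
  right_E_linear_implies_braided_left_E_linear_general k E A Sinv hS₁ hS₂ honeA f hf
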